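/- arXiv:2207.01564 — 4 statements merged into one kernel-verified Lean document; each statement's English description precedes it below -/
import Mathlib

section
/- Let G be a finite group and χ an irreducible complex character of G with χ(1) = 4. Then χ(g) ≠ 0 for every 2-regular element g of G (every g of odd order). In particular, χ is a quasi 2-Steinberg character of G. -/
/-!
The eigenvalues of `ρ g` are four `n`-th roots of unity with `n = orderOf g` odd, and the
character value is their sum. Since `2` and `4` are prime to `n`, the Galois automorphisms
`ζ ↦ ζ²` and `ζ ↦ ζ⁴` of `ℚ(ζ)` carry a vanishing sum of `n`-th roots of unity to vanishing
sums of their squares and fourth powers. By Newton's identities the power sums `p₁ = p₂ = p₄ = 0`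
force the product of the four eigenvalues to vanish, which is absurd for roots of unity.
-/

open CategoryTheory Polynomial

theorem mul_mul_mul_eq_zero_of_sum_pow_eq_zero {R : Type*} [CommRing R] [NoZeroDivisors R]
    [CharZero R] {a b c d : R} (h1 : a + b + c + d = 0) (h2 : a ^ 2 + b ^ 2 + c ^ 2 + d ^ 2 = 0)
    (h4 : a ^ 4 + b ^ 4 + c ^ 4 + d ^ 4 = 0) : a * b * c * d = 0 := by
  -- Newton's identities: `24 abcd = p₁ (p₁³ - 6 p₁ p₂ + 8 p₃) + 3 p₂² - 6 p₄`.
  have : (24 : R) * (a * b * c * d) = 0 := by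
    linear_combination
      ((a + b + c + d) ^ 3 - 6 * (a + b + c + d) * (a ^ 2 + b ^ 2 + c ^ 2 + d ^ 2)
          + 8 * (a ^ 3 + b ^ 3 + c ^ 3 + d ^ 3)) * h1
        + 3 * (a ^ 2 + b ^ 2 + c ^ 2 + d ^ 2) * h2 - 6 * h4
  simpa using this

namespace IsPrimitiveRoot

variable {R : Type*} [CommRing R] [IsDomain R] [CharZero R] {ζ : R} {n : ℕ}

theorem aeval_pow_eq_zero (hζ : IsPrimitiveRoot ζ n) (hn : 0 < n) {k : ℕ} (hk : k.Coprime n)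
    {P : ℤ[X]} (hP : aeval ζ P = 0) : aeval (ζ ^ k) P = 0 := by
  obtain ⟨Q, rfl⟩ := minpoly.isIntegrallyClosed_dvd (hζ.isIntegral hn) hP
  rw [map_mul, hζ.minpoly_eq_pow_coprime hk, minpoly.aeval, zero_mul]

theorem sum_map_pow_eq_zero (hζ : IsPrimitiveRoot ζ n) (hn : 0 < n) {k : ℕ} (hk : k.Coprime n)
    {s : Multiset R} (hs : ∀ x ∈ s, x ^ n = 1) (hsum : s.sum = 0) :
    (s.map (· ^ k)).sum = 0 := by
  have : NeZero n := ⟨hn.ne'⟩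
  have hpow : ∀ x ∈ s, ∃ i, ζ ^ i = x := fun x hx =>
    (hζ.eq_pow_of_pow_eq_one (hs x hx)).imp fun _ => And.right
  choose! e he using hpow
  set P : ℤ[X] := (s.map fun x => X ^ e x).sum
  have haeval : ∀ y : R, aeval y P = (s.map fun x => y ^ e x).sum := fun y => by
    simp [P, map_multiset_sum, Multiset.map_map]
  have hP : aeval ζ P = 0 := by
    rw [haeval, Multiset.map_congr rfl he, Multiset.map_id', hsum]
  rw [← hζ.aeval_pow_eq_zero hn hk hP, haeval]
  refine congrArg _ (Multiset.map_congr rfl fun x hx => ?_)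
  rw [← pow_mul, mul_comm, pow_mul, he x hx]

theorem sum_ne_zero_of_card_eq_four (hζ : IsPrimitiveRoot ζ n) (hodd : Odd n)
    {s : Multiset R} (hcard : Multiset.card s = 4) (hs : ∀ x ∈ s, x ^ n = 1) : s.sum ≠ 0 := by
  intro hsum
  have hn : 0 < n := hodd.pos
  have hcop2 : Nat.Coprime 2 n := Nat.coprime_two_left.mpr hodd
  have h2 := hζ.sum_map_pow_eq_zero hn hcop2 hs hsum
  have h4 := hζ.sum_map_pow_eq_zero hn (hcop2.pow_left 2) hs hsum
  obtain ⟨a, b, c, d, rfl⟩ := Multiset.card_eq_four.mp hcard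
  simp only [Multiset.insert_eq_cons, Multiset.sum_cons, Multiset.sum_singleton,
    Multiset.map_cons, Multiset.map_singleton, ← add_assoc] at hsum h2 h4
  have hprod : (a * b * c * d) ^ n = 1 := by simp [mul_pow, hs]
  have hprod_ne : a * b * c * d ≠ 0 := fun h => by simp [h, zero_pow hn.ne'] at hprod
  exact hprod_ne (mul_mul_mul_eq_zero_of_sum_pow_eq_zero hsum h2 (by simpa [← pow_mul] using h4))

end IsPrimitiveRoot

theorem Module.End.pow_eq_one_of_isRoot_charpoly {K V : Type*} [Field K] [AddCommGroup V]
    [Module K V] [Module.Finite K V] {f : Module.End K V} {n : ℕ} (hf : f ^ n = 1) {μ : K}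
    (hμ : f.charpoly.IsRoot μ) : μ ^ n = 1 := by
  have hμn := ((Module.End.hasEigenvalue_iff_isRoot_charpoly f μ).mpr hμ).pow n
  rw [hf] at hμn
  obtain ⟨v, hv⟩ := hμn.exists_hasEigenvector
  refine smul_left_injective K hv.2 ?_
  simpa using hv.apply_eq_smul.symm

theorem stmt_2_general (G : Type) [Group G] [Fintype G] (V : FDRep ℂ G)
    (hdeg : V.character 1 = 4) :
    ∀ g : G, ¬ (2 ∣ orderOf g) → V.character g ≠ 0 := by
  intro g hg
  have hodd : Odd (orderOf g) := Nat.odd_iff.mpr (Nat.two_dvd_ne_zero.mp hg)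
  have hpow : V.ρ g ^ orderOf g = 1 := by rw [← map_pow, pow_orderOf_eq_one, map_one]
  have hsplit : (V.ρ g).charpoly.Splits := IsAlgClosed.splits _
  have hcard : Multiset.card (V.ρ g).charpoly.roots = 4 := by
    rw [splits_iff_card_roots.mp hsplit, LinearMap.charpoly_natDegree]
    exact_mod_cast (FDRep.char_one V).symm.trans hdeg
  have hchar : V.character g = (V.ρ g).charpoly.roots.sum :=
    Module.End.trace_eq_sum_roots_charpoly_of_splits hsplit
  rw [hchar]
  exact (Complex.isPrimitiveRoot_exp _ hodd.pos.ne').sum_ne_zero_of_card_eq_four hodd hcard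
    fun μ hμ => Module.End.pow_eq_one_of_isRoot_charpoly hpow (isRoot_of_mem_roots hμ)

/-- An irreducible complex character of degree 4 of a finite group is nonzero on
every 2-regular element (quasi 2-Steinberg). -/
theorem stmt_2 (G : Type) [Group G] [Fintype G] (V : FDRep ℂ G) (hV : Simple V)
    (hdeg : V.character 1 = 4) :
    ∀ g : G, ¬ (2 ∣ orderOf g) → V.character g ≠ 0 :=
  stmt_2_general G V hdeg
end

section
/- Let t be an odd positive integer. Then a sum of four t-th roots of unity is never zero. -/
/-!
Roots of unity have modulus one. If four complex numbers of equal modulus sum to zero, they split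
into two antipodal pairs: conjugating the relation shows that the third elementary symmetric
function vanishes as well, which makes `(a + b) (a + c) (a + d)` vanish. For odd `t`, however, a
`t`-th root of unity is never the negative of another one, since `(-ζ) ^ t = -1`.
-/

open ComplexConjugate

theorem add_ne_zero_of_pow_eq_one_of_odd {R : Type*} [Ring R] [Nontrivial R]
    (hR : ringChar R ≠ 2) {t : ℕ} (ht : Odd t) {a b : R} (ha : a ^ t = 1) (hb : b ^ t = 1) :
    a + b ≠ 0 := by
  intro hab
  rw [eq_neg_of_add_eq_zero_left hab, ht.neg_pow, hb] at ha
  exact hR (neg_one_eq_one_iff.mp ha)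

theorem RCLike.add_eq_zero_or_of_add_add_add_eq_zero {K : Type*} [RCLike K] {a b c d : K}
    (hb : ‖b‖ = ‖a‖) (hc : ‖c‖ = ‖a‖) (hd : ‖d‖ = ‖a‖) (h : a + b + c + d = 0) :
    a + b = 0 ∨ a + c = 0 ∨ a + d = 0 := by
  have hconj : conj a + conj b + conj c + conj d = 0 := by
    simpa only [map_add, map_zero] using congrArg conj h
  have ha' := RCLike.mul_conj a
  have hb' := RCLike.mul_conj b
  have hc' := RCLike.mul_conj c
  have hd' := RCLike.mul_conj d
  rw [hb] at hb'
  rw [hc] at hc'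
  rw [hd] at hd'
  have hsymm : (‖a‖ : K) ^ 2 * (b * c * d + a * c * d + a * b * d + a * b * c) = 0 := by
    linear_combination (a * b * c * d) * hconj - (b * c * d) * ha' - (a * c * d) * hb'
      - (a * b * d) * hc' - (a * b * c) * hd'
  rcases mul_eq_zero.mp hsymm with hr | he
  · have ha0 : a = 0 := by simpa using hr
    have hb0 : b = 0 := norm_eq_zero.mp (by simp [hb, ha0])
    exact Or.inl (by simp [ha0, hb0])
  · have hprod : (a + b) * (a + c) * (a + d) = 0 := by linear_combination a ^ 2 * h + he
    simpa only [mul_eq_zero, or_assoc] using hprod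

theorem stmt_3_general (t : ℕ) (ht : Odd t) (ζ₁ ζ₂ ζ₃ ζ₄ : ℂ)
    (h1 : ζ₁ ^ t = 1) (h2 : ζ₂ ^ t = 1) (h3 : ζ₃ ^ t = 1) (h4 : ζ₄ ^ t = 1) :
    ζ₁ + ζ₂ + ζ₃ + ζ₄ ≠ 0 := by
  have hnorm : ∀ {ζ : ℂ}, ζ ^ t = 1 → ‖ζ‖ = 1 := fun hζ ↦
    Complex.norm_eq_one_of_pow_eq_one hζ ht.pos.ne'
  have hchar : ringChar ℂ ≠ 2 := by simp [ringChar.eq_zero]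
  have hpair : ∀ {ζ : ℂ}, ζ ^ t = 1 → ζ₁ + ζ ≠ 0 :=
    add_ne_zero_of_pow_eq_one_of_odd hchar ht h1
  intro hsum
  rcases RCLike.add_eq_zero_or_of_add_add_add_eq_zero (by rw [hnorm h2, hnorm h1])
      (by rw [hnorm h3, hnorm h1]) (by rw [hnorm h4, hnorm h1]) hsum with h | h | h
  · exact hpair h2 h
  · exact hpair h3 h
  · exact hpair h4 h

/-- A sum of four `t`-th roots of unity, with `t` odd, is never zero. -/
theorem stmt_3 (t : ℕ) (htpos : 0 < t) (ht : Odd t) (ζ₁ ζ₂ ζ₃ ζ₄ : ℂ)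
    (h1 : ζ₁ ^ t = 1) (h2 : ζ₂ ^ t = 1) (h3 : ζ₃ ^ t = 1) (h4 : ζ₄ ^ t = 1) :
    ζ₁ + ζ₂ + ζ₃ + ζ₄ ≠ 0 :=
  stmt_3_general t ht ζ₁ ζ₂ ζ₃ ζ₄ h1 h2 h3 h4
end

section
/- Let N be a normal subgroup of a finite group G, let ρ be an irreducible representation of G and τ an irreducible representation of N with characters χ_ρ, χ_τ such that τ occurs in the restriction of ρ to N. Suppose x ∈ N is such that the G-conjugacy class of x is a single N-conjugacy class (does not split in N). Then χ_ρ(x) = m · χ_τ(x) for some positive integer m. In particular, χ_ρ(x) ≠ 0 if and only if χ_τ(x) ≠ 0. -/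
/-!
Since the character inner product of `ρ|_N` with `τ` is nonzero, there is a nonzero `N`-map
`φ : τ → ρ|_N`. As `ρ` is irreducible, `ρ|_N` is the sum of the translates `ρ g (im φ)`, each an
irreducible `N`-subrepresentation of dimension `dim τ`; hence `dim ρ = m · dim τ`.
The class sum `∑_{g ∈ G} g x g⁻¹` commutes with `G` on `ρ` and, `N` being normal, with `N` on `τ`,
so by Schur it acts by scalars on both, and `φ` forces the two scalars to agree. Taking traces
gives `|G| χ_ρ(x) / dim ρ = |G| χ_τ(x) / dim τ`: because the class of `x` does not split in `N`,
every term `χ_τ(g x g⁻¹)` equals `χ_τ(x)`.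
-/

open CategoryTheory Module

open Matrix in
/-- Averaging gives a positive definite `M` with `(A g)ᴴ * M = M * A g⁻¹`. -/
theorem Matrix.trace_map_inv_eq_star {G K n : Type*} [Group G] [Fintype G] [Fintype n]
    [DecidableEq n] [Field K] [PartialOrder K] [StarRing K] [StarOrderedRing K]
    (A : G →* Matrix n n K) (g : G) : (A g⁻¹).trace = star (A g).trace := by
  set M := ∑ h, (A h)ᴴ * A h
  have hM : M.PosDef := posDef_sum Finset.univ_nonempty fun h _ =>
    .conjTranspose_mul_self _ (mulVec_injective_iff_isUnit.2 ((Group.isUnit h).map A))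
  have hinv : (A g)ᴴ * M * A g = M := by
    simp only [M, Finset.mul_sum, Finset.sum_mul, Matrix.mul_assoc, ← Matrix.mul_assoc (A g)ᴴ,
      ← conjTranspose_mul, ← map_mul]
    exact Fintype.sum_equiv (Equiv.mulRight g) _ _ fun _ => rfl
  have hintertwine : (A g)ᴴ * M = M * A g⁻¹ := by
    conv_rhs => rw [← hinv]
    rw [Matrix.mul_assoc _ (A g), ← map_mul, mul_inv_cancel, map_one, Matrix.mul_one]
  have hconj : (A g)ᴴ = M * A g⁻¹ * M⁻¹ := by
    rw [← hintertwine, mul_nonsing_inv_cancel_right _ _ ((isUnit_iff_isUnit_det _).1 hM.isUnit)]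
  rw [← trace_conjTranspose, hconj, trace_conj hM.isUnit]

theorem FDRep.isIrreducible_of_simple {k G : Type*} [Field k] [Monoid G] (V : FDRep k G)
    [Simple V] : Representation.IsIrreducible V.ρ := by
  have : Nontrivial V := by
    by_contra h
    rw [not_nontrivial_iff_subsingleton] at h
    exact id_nonzero V (by ext v; exact Subsingleton.elim _ _)
  refine { exists_pair_ne := ⟨⊥, ⊤, fun h => bot_ne_top (congrArg (·.toSubmodule) h)⟩,
           eq_bot_or_eq_top := fun W => or_iff_not_imp_left.2 fun hW => ?_ }
  let i : FDRep.of W.toRepresentation ⟶ V :=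
    ⟨FGModuleCat.ofHom W.toSubmodule.subtype, fun _ => rfl⟩
  have : Mono i := ConcreteCategory.mono_of_injective i Subtype.val_injective
  have : IsIso i := by
    refine isIso_of_mono_of_nonzero fun hi => hW <| Subrepresentation.ext <|
      (Submodule.eq_bot_iff _).2 fun v hv => ?_
    exact congrArg (fun f : FDRep.of W.toRepresentation ⟶ V => f (⟨v, hv⟩ : W.toSubmodule)) hi
  obtain ⟨_, hsurj⟩ := ConcreteCategory.bijective_of_isIso i
  refine Subrepresentation.ext <| Submodule.eq_top_iff'.2 fun v => ?_
  obtain ⟨w, rfl⟩ := hsurj v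
  exact w.2

theorem Subrepresentation.dvd_finrank_finset_sup {k G V : Type*} [Field k] [Group G]
    [AddCommGroup V] [Module k V] [FiniteDimensional k V] {ρ : Representation k G V} {ι : Type*}
    (W : ι → Subrepresentation ρ) (hW : ∀ i, IsAtom (W i)) {d : ℕ}
    (hd : ∀ i, finrank k (W i).toSubmodule = d) (s : Finset ι) :
    d ∣ finrank k (s.sup W).toSubmodule := by
  classical
  induction s using Finset.induction_on with
  | empty => exact (finrank_bot k V).symm ▸ dvd_zero d
  | insert i s _ ih =>
    have hsum := Submodule.finrank_sup_add_finrank_inf_eq (W i).toSubmodule (s.sup W).toSubmodule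
    rw [Finset.sup_insert, toSubmodule_sup]
    rcases (hW i).le_iff.1 (inf_le_left : W i ⊓ s.sup W ≤ W i) with h | h
    · rw [← toSubmodule_inf, h, show (⊥ : Subrepresentation ρ).toSubmodule = ⊥ from rfl,
        finrank_bot, add_zero, hd] at hsum
      exact hsum ▸ dvd_add dvd_rfl ih
    · rw [← toSubmodule_inf, h, add_comm, add_left_cancel_iff] at hsum
      exact hsum ▸ ih

namespace Representation

theorem char_inv {k G V : Type*} [Field k] [PartialOrder k] [StarRing k] [StarOrderedRing k]
    [Group G] [Fintype G] [AddCommGroup V] [Module k V] [FiniteDimensional k V]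
    (ρ : Representation k G V) (g : G) : ρ.character g⁻¹ = star (ρ.character g) := by
  let b := Module.finBasis k V
  simp only [character, LinearMap.trace_eq_matrix_trace k b]
  exact Matrix.trace_map_inv_eq_star ((LinearMap.toMatrixAlgEquiv b).toMonoidHom.comp ρ) g

theorem exists_intertwiningMap_ne_zero {k G V W : Type*} [Field k] [Group G] [Fintype G]
    [Invertible (Nat.card G : k)] [AddCommGroup V] [Module k V] [FiniteDimensional k V]
    [AddCommGroup W] [Module k W] [FiniteDimensional k W] (ρ : Representation k G V)
    (σ : Representation k G W) (h : ∑ g, σ.character g * ρ.character g⁻¹ ≠ 0) :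
    ∃ f : IntertwiningMap ρ σ, f ≠ 0 := by
  by_contra! hf
  have : Subsingleton (IntertwiningMap ρ σ) := ⟨fun f g => (hf f).trans (hf g).symm⟩
  have := card_inv_mul_sum_char_mul_char_eq_finrank ρ σ
  rw [finrank_zero_of_subsingleton, Nat.cast_zero] at this
  exact h ((mul_eq_zero.1 this).resolve_left (inv_ne_zero (Invertible.ne_zero _)))

theorem sum_commute_of_equivariant {k G H V : Type*} [CommSemiring k] [Group G] [Fintype G]
    [Group H] [AddCommMonoid V] [Module k V] (ρ : Representation k H V) (ι : H →* G) (c : G → H)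
    (hc : ∀ n g, c (ι n * g) = n * c g * n⁻¹) (n : H) :
    Commute (∑ g, ρ (c g)) (ρ n) := by
  rw [Commute, SemiconjBy, Finset.sum_mul, Finset.mul_sum]
  refine Fintype.sum_equiv (Equiv.mulLeft (ι n⁻¹)) _ _ fun g => ?_
  rw [Equiv.coe_mulLeft, hc, ← map_mul, ← map_mul]
  group

namespace IsIrreducible

variable {k G V : Type*} [Field k] [Group G] [AddCommGroup V] [Module k V]

theorem nontrivial (ρ : Representation k G V) [ρ.IsIrreducible] : Nontrivial V := by
  by_contra h
  rw [not_nontrivial_iff_subsingleton] at h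
  exact bot_ne_top (Subrepresentation.ext (Subsingleton.elim _ _) : (⊥ : Subrepresentation ρ) = ⊤)

theorem exists_eq_smul_id [IsAlgClosed k] [FiniteDimensional k V] (ρ : Representation k G V)
    [ρ.IsIrreducible] (f : V →ₗ[k] V)
    (hf : ∀ g, Commute f (ρ g)) : ∃ a : k, f = a • LinearMap.id := by
  obtain ⟨a, ha⟩ := algebraMap_intertwiningMap_bijective_of_isAlgClosed.surjective
    (⟨f, fun g => (hf g).eq⟩ : IntertwiningMap ρ ρ)
  exact ⟨a, congrArg IntertwiningMap.toLinearMap ha.symm⟩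

end IsIrreducible

variable {k G V U : Type*} [Field k] [Group G] [AddCommGroup V] [Module k V] [AddCommGroup U]
  [Module k U] {N : Subgroup G} [N.Normal] {ρ : Representation k G V} {τ : Representation k N U}

namespace IntertwiningMap

variable (φ : IntertwiningMap τ (ρ.comp N.subtype))

/-- The image of the conjugate representation `n ↦ τ (g⁻¹ n g)` under `ρ g ∘ φ`. -/
def conjRange (g : G) : Subrepresentation (ρ.comp N.subtype) where
  toSubmodule := LinearMap.range (ρ g ∘ₗ φ.toLinearMap)
  apply_mem_toSubmodule n := by
    rintro _ ⟨u, rfl⟩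
    refine ⟨τ ⟨g⁻¹ * n * g, by simpa using ‹N.Normal›.conj_mem _ n.2 g⁻¹⟩ u, ?_⟩
    simp only [LinearMap.comp_apply, toLinearMap_apply, φ.isIntertwining, MonoidHom.comp_apply,
      ← Module.End.mul_apply, ← map_mul, Subgroup.subtype_apply]
    group

theorem finrank_conjRange [τ.IsIrreducible] (hφ : φ ≠ 0) (g : G) :
    finrank k (φ.conjRange g).toSubmodule = finrank k U :=
  LinearMap.finrank_range_of_inj <| by
    rw [LinearMap.coe_comp]
    exact (ρ.apply_bijective g).1.comp ((IsIrreducible.injective_or_eq_zero φ).resolve_right hφ)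

theorem isAtom_conjRange [FiniteDimensional k U] [τ.IsIrreducible] (hφ : φ ≠ 0) (g : G) :
    IsAtom (φ.conjRange g) := by
  have := IsIrreducible.nontrivial τ
  refine ⟨fun h => ?_, fun p hp => ?_⟩
  · have := φ.finrank_conjRange hφ g
    rw [h] at this
    exact finrank_pos.ne' (this.symm.trans (finrank_bot k V))
  let q : Subrepresentation τ :=
    { toSubmodule := p.toSubmodule.comap (ρ g ∘ₗ φ.toLinearMap)
      apply_mem_toSubmodule n u hu := by
        have := p.apply_mem_toSubmodule ⟨g * n * g⁻¹, ‹N.Normal›.conj_mem _ n.2 g⟩ hu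
        simp only [Submodule.mem_comap, LinearMap.comp_apply, toLinearMap_apply,
          φ.isIntertwining] at this ⊢
        convert this using 1
        simp only [MonoidHom.comp_apply, ← Module.End.mul_apply, ← map_mul, Subgroup.subtype_apply]
        group }
  rcases IsSimpleOrder.eq_bot_or_eq_top q with hq | hq
  · refine Subrepresentation.ext <| (Submodule.eq_bot_iff _).2 fun v hv => ?_
    obtain ⟨u, rfl⟩ := hp.le hv
    have hu : u ∈ q.toSubmodule := hv
    rw [hq] at hu
    rw [(Submodule.mem_bot k).1 hu, map_zero]
  · refine absurd (fun v ⟨u, hu⟩ => hu ▸ ?_) hp.not_ge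
    change u ∈ q.toSubmodule
    rw [hq]
    exact Submodule.mem_top

theorem finset_sup_conjRange [Fintype G] [FiniteDimensional k U] [ρ.IsIrreducible]
    [τ.IsIrreducible] (hφ : φ ≠ 0) : Finset.univ.sup φ.conjRange = ⊤ := by
  set S := Finset.univ.sup φ.conjRange
  have hS (a : G) : S.toSubmodule ≤ S.toSubmodule.comap (ρ a) := by
    refine Finset.sup_induction (p := fun X : Subrepresentation _ =>
      X.toSubmodule ≤ S.toSubmodule.comap (ρ a)) bot_le (fun _ h₁ _ h₂ => sup_le h₁ h₂)
      fun g _ => ?_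
    rintro _ ⟨u, rfl⟩
    exact Finset.le_sup (f := φ.conjRange) (Finset.mem_univ (a * g)) ⟨u, by simp [map_mul]⟩
  let S' : Subrepresentation ρ := ⟨S.toSubmodule, fun a _ hv => hS a hv⟩
  rcases IsSimpleOrder.eq_bot_or_eq_top S' with h | h
  · refine absurd (eq_bot_iff.2 ?_) (φ.isAtom_conjRange hφ 1).1
    exact (Finset.le_sup (Finset.mem_univ 1)).trans
      (Subrepresentation.ext (congrArg (·.toSubmodule) h)).le
  · exact Subrepresentation.ext (congrArg (·.toSubmodule) h)

theorem finrank_dvd_finrank [Fintype G] [FiniteDimensional k V] [FiniteDimensional k U]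
    [ρ.IsIrreducible] [τ.IsIrreducible] (hφ : φ ≠ 0) : finrank k U ∣ finrank k V := by
  have := Subrepresentation.dvd_finrank_finset_sup φ.conjRange (φ.isAtom_conjRange hφ)
    (φ.finrank_conjRange hφ) Finset.univ
  rw [φ.finset_sup_conjRange hφ] at this
  exact finrank_top k V ▸ this

theorem char_mul_finrank_eq [Fintype G] [IsAlgClosed k] [CharZero k] [FiniteDimensional k V]
    [FiniteDimensional k U] [ρ.IsIrreducible] [τ.IsIrreducible] (hφ : φ ≠ 0) (x : N)
    (hx : ∀ g : G, ∃ h : N, g * x * g⁻¹ = h * x * h⁻¹) :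
    ρ.character x * finrank k U = τ.character x * finrank k V := by
  let c : G → N := fun g => ⟨g * x * g⁻¹, ‹N.Normal›.conj_mem _ x.2 g⟩
  obtain ⟨a, ha⟩ := IsIrreducible.exists_eq_smul_id ρ _ <|
    sum_commute_of_equivariant ρ (MonoidHom.id G) (fun g => g * x * g⁻¹) fun _ _ => by
      simp only [MonoidHom.id_apply]
      group
  obtain ⟨b, hb⟩ := IsIrreducible.exists_eq_smul_id τ _ <|
    sum_commute_of_equivariant τ N.subtype c fun _ _ => Subtype.ext <| by
      simp only [c, Subgroup.subtype_apply, Subgroup.coe_mul, Subgroup.coe_inv]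
      group
  have hab : a = b := by
    have hcomm : (∑ g, ρ (g * x * g⁻¹)) ∘ₗ φ.toLinearMap = φ.toLinearMap ∘ₗ ∑ g, τ (c g) := by
      ext u
      simp [map_sum, φ.isIntertwining, c]
    rw [ha, hb, LinearMap.smul_comp, LinearMap.comp_smul, LinearMap.id_comp,
      LinearMap.comp_id] at hcomm
    exact smul_left_injective k (fun h => hφ (IntertwiningMap.ext h)) hcomm
  have hρ : ∑ g : G, ρ.character (g * x * g⁻¹) = a * finrank k V := by
    have := congrArg (LinearMap.trace k V) ha
    rwa [map_sum, map_smul, LinearMap.trace_id, smul_eq_mul] at this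
  have hτ : ∑ g : G, τ.character (c g) = b * finrank k U := by
    have := congrArg (LinearMap.trace k U) hb
    rwa [map_sum, map_smul, LinearMap.trace_id, smul_eq_mul] at this
  have hcx (g : G) : τ.character (c g) = τ.character x := by
    obtain ⟨h, hh⟩ := hx g
    rw [show c g = h * x * h⁻¹ from Subtype.ext (by simpa [c] using hh), τ.char_conj]
  simp only [ρ.char_conj, hcx, Finset.sum_const, Finset.card_univ, nsmul_eq_mul] at hρ hτ
  subst hab
  refine mul_left_cancel₀ (Nat.cast_ne_zero.2 Fintype.card_ne_zero : (Fintype.card G : k) ≠ 0) ?_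
  linear_combination (finrank k U : k) * hρ - (finrank k V : k) * hτ

theorem exists_char_eq_nat_mul_char [Fintype G] [IsAlgClosed k] [CharZero k]
    [FiniteDimensional k V] [FiniteDimensional k U] [ρ.IsIrreducible] [τ.IsIrreducible]
    (hφ : φ ≠ 0) (x : N) (hx : ∀ g : G, ∃ h : N, g * x * g⁻¹ = h * x * h⁻¹) :
    ∃ m : ℕ, 0 < m ∧ ρ.character x = m * τ.character x := by
  have := IsIrreducible.nontrivial ρ
  have := IsIrreducible.nontrivial τ
  obtain ⟨m, hm⟩ := φ.finrank_dvd_finrank hφ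
  have hdτ : (finrank k U : k) ≠ 0 := Nat.cast_ne_zero.2 finrank_pos.ne'
  refine ⟨m, Nat.pos_of_mul_pos_left (hm ▸ finrank_pos), mul_right_cancel₀ hdτ ?_⟩
  rw [φ.char_mul_finrank_eq hφ x hx, hm, Nat.cast_mul]
  ring

end IntertwiningMap

end Representation

/-- Clifford theory: if an irreducible character `χ_τ` of a normal subgroup `N` occurs in the
restriction of an irreducible character `χ_ρ` of `G`, and the `G`-conjugacy class of `x ∈ N`
does not split in `N`, then `χ_ρ(x) = m · χ_τ(x)` for a positive integer `m`; in particular,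
`χ_ρ(x) ≠ 0 ↔ χ_τ(x) ≠ 0`. -/
theorem stmt_6 (G : Type) [Group G] [Fintype G] (N : Subgroup G) [N.Normal] [Fintype N]
    (ρ : FDRep ℂ G) (hρ : Simple ρ) (τ : FDRep ℂ N) (hτ : Simple τ)
    (hocc : (∑ y : N, ρ.character (y : G) * (starRingEnd ℂ) (τ.character y)) ≠ 0)
    (x : N) (hnosplit : ∀ g : G, ∃ h : N, g * (x : G) * g⁻¹ = (h : G) * (x : G) * (h : G)⁻¹) :
    (∃ m : ℕ, 0 < m ∧ ρ.character (x : G) = (m : ℂ) * τ.character x) ∧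
      (ρ.character (x : G) ≠ 0 ↔ τ.character x ≠ 0) := by
  have := FDRep.isIrreducible_of_simple ρ
  have := FDRep.isIrreducible_of_simple τ
  have : Invertible (Nat.card N : ℂ) := invertibleOfNonzero (Nat.cast_ne_zero.2 Nat.card_pos.ne')
  obtain ⟨φ, hφ⟩ := Representation.exists_intertwiningMap_ne_zero τ.ρ (ρ.ρ.comp N.subtype)
    (by open scoped ComplexOrder in simp only [Representation.char_inv]; exact hocc)
  obtain ⟨m, hm, hχ⟩ := φ.exists_char_eq_nat_mul_char hφ x hnosplit
  replace hχ : ρ.character (x : G) = m * τ.character x := hχ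
  refine ⟨⟨m, hm, hχ⟩, ?_⟩
  rw [hχ, mul_ne_zero_iff, and_iff_right (Nat.cast_ne_zero.2 hm.ne')]
end

section
/- Let ω = e^{2πi/r}, let j ≠ k in {0,…,r−1}, and let z₁, z₂, z₃, z₄ ∈ ℤ/rℤ each have odd order. Then ω^{(j−k)(z₁−z₄)} + ω^{(j−k)(z₁−z₂)} + ω^{(j−k)(z₁−z₃)} + 1 ≠ 0. -/
open Complex

lemma aux_four (a b c : ℂ) (da db dc : ℕ) (hda : Odd da) (hdb : Odd db) (hdc : Odd dc)
    (ha : a ^ da = 1) (hb : b ^ db = 1) (hc : c ^ dc = 1)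
    (h : a + b + c + 1 = 0) : False := by
  have hda0 : da ≠ 0 := by rintro rfl; exact absurd hda (by simp)
  have hdb0 : db ≠ 0 := by rintro rfl; exact absurd hdb (by simp)
  have hdc0 : dc ≠ 0 := by rintro rfl; exact absurd hdc (by simp)
  have hca : (starRingEnd ℂ) a = a⁻¹ :=
    (Complex.inv_eq_conj (Complex.norm_eq_one_of_pow_eq_one ha hda0)).symm
  have hcb : (starRingEnd ℂ) b = b⁻¹ :=
    (Complex.inv_eq_conj (Complex.norm_eq_one_of_pow_eq_one hb hdb0)).symm
  have hcc : (starRingEnd ℂ) c = c⁻¹ :=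
    (Complex.inv_eq_conj (Complex.norm_eq_one_of_pow_eq_one hc hdc0)).symm
  have ha0 : a ≠ 0 := by
    intro h0; rw [h0, zero_pow hda0] at ha; exact zero_ne_one ha
  have hb0 : b ≠ 0 := by
    intro h0; rw [h0, zero_pow hdb0] at hb; exact zero_ne_one hb
  have hc0 : c ≠ 0 := by
    intro h0; rw [h0, zero_pow hdc0] at hc; exact zero_ne_one hc
  have h2 : a⁻¹ + b⁻¹ + c⁻¹ + 1 = 0 := by
    have := congrArg (starRingEnd ℂ) h
    simpa [hca, hcb, hcc] using this
  have h3 : b * c + a * c + a * b + a * b * c = 0 := by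
    have := congrArg (· * (a * b * c)) h2
    field_simp at this
    linear_combination this
  have h4 : (1 + a) * (1 + b) * (1 + c) = 0 := by ring_nf; linear_combination h + h3
  have : a = -1 ∨ b = -1 ∨ c = -1 := by
    rcases mul_eq_zero.1 h4 with h5 | h5
    · rcases mul_eq_zero.1 h5 with h6 | h6
      · left; linear_combination h6
      · right; left; linear_combination h6
    · right; right; linear_combination h5
  rcases this with rfl | rfl | rfl
  · rw [hda.neg_one_pow] at ha; norm_num at ha
  · rw [hdb.neg_one_pow] at hb; norm_num at hb
  · rw [hdc.neg_one_pow] at hc; norm_num at hc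

lemma aux_odd {G : Type*} [AddCommGroup G] (a b : G)
    (ha : Odd (addOrderOf a)) (hb : Odd (addOrderOf b)) : Odd (addOrderOf (a - b)) := by
  have h1 : addOrderOf (a - b) ∣ Nat.lcm (addOrderOf a) (addOrderOf b) := by
    rw [sub_eq_add_neg]
    simpa [addOrderOf_neg] using (AddCommute.all a (-b)).addOrderOf_add_dvd_lcm
  have h2 : addOrderOf (a - b) ∣ addOrderOf a * addOrderOf b :=
    h1.trans (Nat.lcm_dvd_mul _ _)
  have hodd := ha.mul hb
  rw [Nat.not_even_iff_odd.symm] at hodd ⊢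
  intro he
  obtain ⟨c, hc⟩ := he.two_dvd.trans h2
  exact hodd ⟨c, by omega⟩

/-- For `ω = e^{2πi/r}`, `j ≠ k` in `{0,…,r−1}`, and `z₁,z₂,z₃,z₄ ∈ ℤ/rℤ` of odd
(additive) order, `ω^{(j−k)(z₁−z₄)} + ω^{(j−k)(z₁−z₂)} + ω^{(j−k)(z₁−z₃)} + 1 ≠ 0`. -/
theorem stmt_12 (r : ℕ) (hr : 0 < r) (j k : ℕ) (hj : j < r) (hk : k < r) (hjk : j ≠ k)
    (z : Fin 4 → ZMod r) (hz : ∀ i, Odd (addOrderOf (z i)))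
    (ω : ℂ) (hω : ω = Complex.exp (2 * Real.pi * Complex.I / r)) :
    ω ^ (((j : ℤ) - k) * ((z 0 - z 3).val : ℤ)) +
      ω ^ (((j : ℤ) - k) * ((z 0 - z 1).val : ℤ)) +
      ω ^ (((j : ℤ) - k) * ((z 0 - z 2).val : ℤ)) + 1 ≠ 0 := by
  haveI : NeZero r := ⟨hr.ne'⟩
  have hr0 : (r : ℂ) ≠ 0 := Nat.cast_ne_zero.2 hr.ne'
  have hωr : ω ^ (r : ℤ) = 1 := by
    rw [hω, zpow_natCast, ← Complex.exp_nat_mul]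
    rw [mul_div_assoc', mul_div_cancel_left₀ _ hr0]
    exact Complex.exp_two_pi_mul_I
  set t : ℤ := (j : ℤ) - k with ht
  -- key: each term is a root of unity of odd order
  have key : ∀ i : Fin 4, (ω ^ (t * ((z 0 - z i).val : ℤ))) ^ addOrderOf (z 0 - z i) = 1 := by
    intro i
    set x := z 0 - z i with hx
    set d := addOrderOf x with hd
    have hdx : d • x = 0 := addOrderOf_nsmul_eq_zero x
    have hdvd : r ∣ d * x.val := by
      have : ((d * x.val : ℕ) : ZMod r) = 0 := by
        push_cast
        rw [ZMod.natCast_val, ZMod.cast_id]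
        rw [nsmul_eq_mul] at hdx
        exact hdx
      exact (ZMod.natCast_eq_zero_iff _ _).1 this
    obtain ⟨s, hs⟩ := hdvd
    rw [← zpow_natCast, ← zpow_mul]
    have hs' : (d : ℤ) * (x.val : ℤ) = (r : ℤ) * s := by exact_mod_cast hs
    have : t * (x.val : ℤ) * d = (r : ℤ) * (t * s) := by linear_combination t * hs'
    rw [this, zpow_mul, hωr, one_zpow]
  have hodd : ∀ i : Fin 4, Odd (addOrderOf (z 0 - z i)) := fun i => aux_odd _ _ (hz 0) (hz i)
  intro hsum
  exact aux_four _ _ _ _ _ _ (hodd 3) (hodd 1) (hodd 2) (key 3) (key 1) (key 2) hsum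
end
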